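/- arXiv:1904.07830 — 2 statements merged into one kernel-verified Lean document; each statement's English description precedes it below -/
import Mathlib

section
/- Let k : ℕ → ℕ be a sequence of natural numbers such that k(n)/√n → 0 as n → ∞. Then the real-valued sequence C(n − k(n), k(n)) / C(n, k(n)) converges to 1 as n → ∞, where C(a, b) denotes the binomial coefficient 'a choose b'. -/
open Filter Real

/-- Key lower bound: if `4 k² ≤ n` then the choose ratio is at least `1 - 2k²/n`. -/
lemma choose_ratio_lower (n K : ℕ) (hn : 1 ≤ n) (h4 : 4 * K ^ 2 ≤ n) :
    1 - 2 * (K : ℝ) ^ 2 / n ≤ ((n - K).choose K : ℝ) / (n.choose K : ℝ) := by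
  rcases Nat.eq_zero_or_pos K with hK | hK
  · subst hK
    simp [Nat.choose_zero_right]
  have h2k : 2 * K ≤ n := by nlinarith
  have hKn : K ≤ n - K := by omega
  have hnpos : (0:ℝ) < n := by exact_mod_cast hn
  -- ratio in terms of descending factorials
  have hdenom_pos : 0 < n.choose K := Nat.choose_pos (by omega)
  have hratio : ((n - K).choose K : ℝ) / (n.choose K : ℝ)
      = ((n - K).descFactorial K : ℝ) / (n.descFactorial K : ℝ) := by
    rw [Nat.descFactorial_eq_factorial_mul_choose, Nat.descFactorial_eq_factorial_mul_choose]
    push_cast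
    rw [mul_div_mul_left]
    exact_mod_cast Nat.factorial_ne_zero K
  rw [hratio]
  have hdf_pos : 0 < n.descFactorial K := by
    rw [Nat.pos_iff_ne_zero]
    intro hz
    exact absurd (Nat.descFactorial_eq_zero_iff_lt.mp hz) (by omega)
  have hdf_le : (n.descFactorial K : ℝ) ≤ (n : ℝ) ^ K := by
    exact_mod_cast Nat.descFactorial_le_pow n K
  have hlow : ((n - 2 * K + 1 : ℕ) : ℝ) ^ K ≤ ((n - K).descFactorial K : ℝ) := by
    have := Nat.pow_sub_le_descFactorial (n - K) K
    have heq : n - K + 1 - K = n - 2 * K + 1 := by omega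
    rw [heq] at this
    exact_mod_cast this
  have hpow_pos : (0:ℝ) < (n : ℝ) ^ K := by positivity
  have step1 : ((n - 2*K + 1 : ℕ) : ℝ) ^ K / (n : ℝ) ^ K
      ≤ ((n - K).descFactorial K : ℝ) / (n.descFactorial K : ℝ) := by
    apply div_le_div₀ (by positivity) hlow (by exact_mod_cast hdf_pos) hdf_le
  refine le_trans ?_ step1
  -- Bernoulli
  have hcast : ((n - 2*K + 1 : ℕ) : ℝ) = (n : ℝ) - 2*K + 1 := by
    push_cast [Nat.cast_sub h2k]
    ring
  rw [hcast]
  have ha : (-2 : ℝ) ≤ ((1 : ℝ) - 2*K) / n := by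
      rw [le_div_iff₀ hnpos]
      have : (2*K : ℝ) ≤ n := by exact_mod_cast h2k
      nlinarith
  have hb := one_add_mul_le_pow ha K
  have heq2 : (1 : ℝ) + ((1 : ℝ) - 2*K)/n = ((n:ℝ) - 2*K + 1)/n := by
    field_simp
    ring
  rw [heq2] at hb
  calc (1 : ℝ) - 2 * (K : ℝ) ^ 2 / n
      ≤ 1 + (K:ℝ) * (((1:ℝ) - 2*K)/n) := by
        have hd : (1:ℝ) + (K:ℝ) * (((1:ℝ) - 2*K)/n) - (1 - 2*(K:ℝ)^2/n) = (K:ℝ)/n := by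
          field_simp
          ring
        have h6 : (0:ℝ) ≤ (K:ℝ)/n := by positivity
        linarith
    _ ≤ (((n:ℝ) - 2*K + 1)/n) ^ K := hb
    _ = ((n:ℝ) - 2*K + 1) ^ K / (n:ℝ) ^ K := div_pow _ _ _

/-- If `k(n)/√n → 0`, then `C(n − k(n), k(n)) / C(n, k(n)) → 1` as real numbers. -/
theorem stmt_3 (k : ℕ → ℕ)
    (h : Filter.Tendsto (fun n : ℕ => (k n : ℝ) / Real.sqrt n) Filter.atTop (nhds 0)) :
    Filter.Tendsto (fun n : ℕ => ((n - k n).choose (k n) : ℝ) / (n.choose (k n) : ℝ))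
      Filter.atTop (nhds 1) := by
  -- eventually 4 (k n)² ≤ n
  have hsmall : ∀ᶠ n : ℕ in atTop, 4 * (k n) ^ 2 ≤ n ∧ 1 ≤ n := by
    have h1 : ∀ᶠ n : ℕ in atTop, |(k n : ℝ) / Real.sqrt n| < 1/2 := by
      have := h.abs.eventually_lt_const (show |(0:ℝ)| < 1/2 by norm_num)
      simpa using this
    filter_upwards [h1, eventually_ge_atTop 1] with n hn hn1
    refine ⟨?_, hn1⟩
    have hs : (0:ℝ) < Real.sqrt n := Real.sqrt_pos.mpr (by exact_mod_cast hn1)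
    rw [abs_div, abs_of_nonneg (by positivity), abs_of_nonneg hs.le,
      div_lt_iff₀ hs] at hn
    have h2 : ((k n : ℝ)) ^ 2 < (1/2 * Real.sqrt n) ^ 2 := by
      apply sq_lt_sq' _ hn
      nlinarith [Nat.cast_nonneg (k n) (α := ℝ)]
    rw [mul_pow, Real.sq_sqrt (by positivity : (0:ℝ) ≤ (n:ℝ))] at h2
    have : (4 * (k n)^2 : ℝ) < n := by nlinarith
    exact_mod_cast this.le
  -- squeeze
  have hlow : Tendsto (fun n : ℕ => 1 - 2 * ((k n : ℝ))^2 / n) atTop (nhds 1) := by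
    have h2 : Tendsto (fun n : ℕ => 1 - 2 * ((k n : ℝ) / Real.sqrt n * ((k n : ℝ) / Real.sqrt n))) atTop (nhds 1) := by
      have := ((h.mul h).const_mul (2:ℝ)).const_sub 1
      simpa using this
    apply h2.congr'
    filter_upwards [eventually_ge_atTop 1] with n hn
    have hnpos : (0:ℝ) < n := by exact_mod_cast hn
    have hs : Real.sqrt n * Real.sqrt n = (n:ℝ) := Real.mul_self_sqrt hnpos.le
    rw [div_mul_div_comm, hs]
    ring
  refine tendsto_of_tendsto_of_tendsto_of_le_of_le' hlow tendsto_const_nhds ?_ ?_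
  · filter_upwards [hsmall] with n hn
    exact choose_ratio_lower n (k n) hn.2 hn.1
  · filter_upwards [hsmall] with n hn
    obtain ⟨h4, hn1⟩ := hn
    have h2k : 2 * k n ≤ n := by nlinarith
    have hpos : 0 < n.choose (k n) := Nat.choose_pos (by omega)
    rw [div_le_one (by exact_mod_cast hpos)]
    exact_mod_cast Nat.choose_le_choose (k n) (by omega : n - k n ≤ n)
end

section
/- Let X₁, …, X_B (B ≥ 1) be iid real-valued square-integrable random variables with common mean μ and variance σ², and let X̄_B = (1/B)∑ᵢ Xᵢ. Let g : ℝ → ℝ be twice differentiable with |g''(x)| ≤ M for all x, and suppose g(X̄_B) is integrable. Then |𝔼[g(X̄_B)] − g(μ)| ≤ M·σ²/(2B). In particular, √B·(𝔼[g(X̄_B)] − g(𝔼[X̄_B])) → 0 as B → ∞. -/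
/-!
Taylor's theorem with `|g''| ≤ M` gives `|g x - g μ - g' μ * (x - μ)| ≤ M / 2 * (x - μ) ^ 2`.
Taking expectations at `x = X̄_B` kills the linear term, since `𝔼 X̄_B = μ`, and bounds the
quadratic one by `M / 2 * Var X̄_B = M σ² / (2B)`, the variance of a mean of `B` independent
copies being `σ² / B`.
-/

open MeasureTheory ProbabilityTheory

section Taylor

open Set

variable {g g' g'' : ℝ → ℝ} {M : ℝ}

theorem abs_taylor_remainder_le_of_le (hg' : ∀ x, HasDerivAt g (g' x) x)
    (hg'' : ∀ x, HasDerivAt g' (g'' x) x) (hM : ∀ x, |g'' x| ≤ M) {a x : ℝ} (hax : a ≤ x) :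
    |g x - g a - g' a * (x - a)| ≤ M / 2 * (x - a) ^ 2 := by
  have hrem : ∀ t, HasDerivAt (fun t => g t - g a - g' a * (t - a)) (g' t - g' a) t := fun t =>
    (((hg' t).sub_const (g a)).sub (((hasDerivAt_id' t).sub_const a).const_mul (g' a))).congr_deriv
      (by ring)
  have hbound : ∀ t, HasDerivAt (fun t => M / 2 * (t - a) ^ 2) (M * (t - a)) t := fun t =>
    ((((hasDerivAt_id' t).sub_const a).pow 2).const_mul (M / 2)).congr_deriv (by push_cast; ring)
  -- Both sides vanish at `a`, and by the mean value theorem for `g'` the derivative of the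
  -- remainder is dominated by that of the bound.
  refine image_norm_le_of_norm_deriv_right_le_deriv_boundary
    (fun t _ => (hrem t).continuousAt.continuousWithinAt) (fun t _ => (hrem t).hasDerivWithinAt)
    (by simp) hbound (fun t ht => ?_) (right_mem_Icc.2 hax)
  have hlip := Convex.norm_image_sub_le_of_norm_hasDerivWithin_le
    (fun y _ => (hg'' y).hasDerivWithinAt) (fun y _ => hM y) convex_univ (mem_univ a) (mem_univ t)
  simpa [Real.norm_eq_abs, abs_of_nonneg (sub_nonneg.2 ht.1)] using hlip

/-- Reflecting `g` through the origin reduces the case `x < a` to `a ≤ x`. -/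
theorem abs_taylor_remainder_le (hg' : ∀ x, HasDerivAt g (g' x) x)
    (hg'' : ∀ x, HasDerivAt g' (g'' x) x) (hM : ∀ x, |g'' x| ≤ M) (a x : ℝ) :
    |g x - g a - g' a * (x - a)| ≤ M / 2 * (x - a) ^ 2 := by
  rcases le_total a x with hax | hxa
  · exact abs_taylor_remainder_le_of_le hg' hg'' hM hax
  · have hg'_neg : ∀ t, HasDerivAt (fun t => g (-t)) (-g' (-t)) t := fun t =>
      ((hg' (-t)).comp t (hasDerivAt_neg' t)).congr_deriv (by ring)
    have hg''_neg : ∀ t, HasDerivAt (fun t => -g' (-t)) (g'' (-t)) t := fun t =>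
      ((hg'' (-t)).comp t (hasDerivAt_neg' t)).neg.congr_deriv (by ring)
    have := abs_taylor_remainder_le_of_le hg'_neg hg''_neg (fun t => hM (-t)) (neg_le_neg hxa)
    simp only [neg_neg] at this
    convert this using 2 <;> ring

end Taylor

section SampleMean

variable {Ω ι : Type*} [MeasurableSpace Ω] {μ : Measure Ω} [Fintype ι] {X : ι → Ω → ℝ}

noncomputable def sampleMean (X : ι → Ω → ℝ) : Ω → ℝ := (Fintype.card ι : ℝ)⁻¹ • ∑ i, X i

theorem memLp_sampleMean {p : ENNReal} (hX : ∀ i, MemLp (X i) p μ) : MemLp (sampleMean X) p μ :=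
  (memLp_finsetSum' _ fun i _ => hX i).const_smul _

theorem integral_sampleMean [Nonempty ι] {m : ℝ} (hX : ∀ i, Integrable (X i) μ)
    (hmean : ∀ i, ∫ ω, X i ω ∂μ = m) : ∫ ω, sampleMean X ω ∂μ = m := by
  have hcard : (Fintype.card ι : ℝ) ≠ 0 := Nat.cast_ne_zero.2 Fintype.card_ne_zero
  simp only [sampleMean, Pi.smul_apply, Finset.sum_apply, smul_eq_mul]
  rw [integral_const_mul, integral_finsetSum _ fun i _ => hX i]
  simp only [hmean, Finset.sum_const, Finset.card_univ, nsmul_eq_mul]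
  field_simp

theorem variance_sampleMean {v : ℝ} (hX : ∀ i, MemLp (X i) 2 μ)
    (hindep : Pairwise fun i j => IndepFun (X i) (X j) μ) (hvar : ∀ i, variance (X i) μ = v) :
    variance (sampleMean X) μ = v / Fintype.card ι := by
  rw [sampleMean, variance_smul, IndepFun.variance_sum (fun i _ => hX i)
    fun i _ j _ hij => hindep hij]
  simp only [hvar, Finset.sum_const, Finset.card_univ, nsmul_eq_mul]
  rcases eq_or_ne (Fintype.card ι : ℝ) 0 with h | h
  · simp [h]
  · field_simp

end SampleMean

section

variable {Ω : Type*} [MeasurableSpace Ω] {μ : Measure Ω} [IsProbabilityMeasure μ]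
  {g g' g'' : ℝ → ℝ} {M : ℝ}

theorem abs_integral_comp_sub_comp_integral_le (hg' : ∀ x, HasDerivAt g (g' x) x)
    (hg'' : ∀ x, HasDerivAt g' (g'' x) x) (hM : ∀ x, |g'' x| ≤ M) {Y : Ω → ℝ}
    (hY : MemLp Y 2 μ) (hgY : Integrable (fun ω => g (Y ω)) μ) :
    |∫ ω, g (Y ω) ∂μ - g (∫ ω, Y ω ∂μ)| ≤ M / 2 * variance Y μ := by
  set m := ∫ ω, Y ω ∂μ
  have hYint : Integrable Y μ := hY.integrable one_le_two
  have hlin : Integrable (fun ω => g' m * (Y ω - m)) μ :=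
    (hYint.sub (integrable_const m)).const_mul _
  have hsq : Integrable (fun ω => (Y ω - m) ^ 2) μ := (hY.sub (memLp_const m)).integrable_sq
  have hremainder : ∫ ω, g (Y ω) ∂μ - g m = ∫ ω, (g (Y ω) - g m - g' m * (Y ω - m)) ∂μ := by
    rw [integral_sub (f := fun ω => g (Y ω) - g m) (hgY.sub (integrable_const _)) hlin,
      integral_sub hgY (integrable_const _), integral_const_mul, integral_sub hYint (integrable_const _)]
    simp [m]
  calc |∫ ω, g (Y ω) ∂μ - g m|
      ≤ ∫ ω, |g (Y ω) - g m - g' m * (Y ω - m)| ∂μ :=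
        hremainder ▸ abs_integral_le_integral_abs
    _ ≤ ∫ ω, M / 2 * (Y ω - m) ^ 2 ∂μ :=
        integral_mono_of_nonneg (.of_forall fun _ => abs_nonneg _) (hsq.const_mul _)
          (.of_forall fun ω => abs_taylor_remainder_le hg' hg'' hM m (Y ω))
    _ = M / 2 * variance Y μ := by
        rw [integral_const_mul, variance_eq_integral hY.aemeasurable]

end

theorem stmt_11_general {Ω : Type*} [MeasureSpace Ω] [IsProbabilityMeasure (ℙ : Measure Ω)]
    (B : ℕ) (hB : 1 ≤ B) (X : Fin B → Ω → ℝ)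
    (hindep : iIndepFun X ℙ)
    (hL2 : ∀ i, MemLp (X i) 2 ℙ)
    (μ0 σ2 : ℝ)
    (hmean : ∀ i, ∫ ω, X i ω ∂ℙ = μ0)
    (hvar : ∀ i, variance (X i) ℙ = σ2)
    (g g' g'' : ℝ → ℝ)
    (hg' : ∀ x, HasDerivAt g (g' x) x)
    (hg'' : ∀ x, HasDerivAt g' (g'' x) x)
    (M : ℝ) (hM : ∀ x, |g'' x| ≤ M)
    (hint : Integrable (fun ω => g ((B : ℝ)⁻¹ * ∑ i, X i ω)) ℙ) :
    |(∫ ω, g ((B : ℝ)⁻¹ * ∑ i, X i ω) ∂ℙ) - g μ0| ≤ M * σ2 / (2 * B) := by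
  have : Nonempty (Fin B) := ⟨⟨0, hB⟩⟩
  have hS : ∀ ω, (B : ℝ)⁻¹ * ∑ i, X i ω = sampleMean X ω := fun ω => by
    simp [sampleMean, Finset.sum_apply]
  simp only [hS] at hint ⊢
  have hmeanS : ∫ ω, sampleMean X ω ∂ℙ = μ0 :=
    integral_sampleMean (fun i => (hL2 i).integrable one_le_two) hmean
  have hvarS : variance (sampleMean X) ℙ = σ2 / B := by
    simpa using variance_sampleMean hL2 (fun i j hij => hindep.indepFun hij) hvar
  calc |∫ ω, g (sampleMean X ω) ∂ℙ - g μ0|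
      ≤ M / 2 * variance (sampleMean X) ℙ :=
        hmeanS ▸ abs_integral_comp_sub_comp_integral_le hg' hg'' hM (memLp_sampleMean hL2) hint
    _ = M * σ2 / (2 * B) := by rw [hvarS]; ring

/-- For iid square-integrable real random variables `X₁,…,X_B` with mean `μ0` and variance
`σ2`, and a twice differentiable `g` with `|g''| ≤ M` such that `g(X̄_B)` is integrable,
`|𝔼[g(X̄_B)] − g(μ0)| ≤ M·σ2/(2B)`. -/
theorem stmt_11 {Ω : Type*} [MeasureSpace Ω] [IsProbabilityMeasure (ℙ : Measure Ω)]
    (B : ℕ) (hB : 1 ≤ B) (X : Fin B → Ω → ℝ)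
    (hmeas : ∀ i, Measurable (X i))
    (hindep : iIndepFun X ℙ)
    (hident : ∀ i j, IdentDistrib (X i) (X j) ℙ ℙ)
    (hL2 : ∀ i, MemLp (X i) 2 ℙ)
    (μ0 σ2 : ℝ)
    (hmean : ∀ i, ∫ ω, X i ω ∂ℙ = μ0)
    (hvar : ∀ i, variance (X i) ℙ = σ2)
    (g g' g'' : ℝ → ℝ)
    (hg' : ∀ x, HasDerivAt g (g' x) x)
    (hg'' : ∀ x, HasDerivAt g' (g'' x) x)
    (M : ℝ) (hM : ∀ x, |g'' x| ≤ M)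
    (hint : Integrable (fun ω => g ((B : ℝ)⁻¹ * ∑ i, X i ω)) ℙ) :
    |(∫ ω, g ((B : ℝ)⁻¹ * ∑ i, X i ω) ∂ℙ) - g μ0| ≤ M * σ2 / (2 * B) :=
  stmt_11_general B hB X hindep hL2 μ0 σ2 hmean hvar g g' g'' hg' hg'' M hM hint
end
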